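/- For any 3×3 complex matrix A, |perm(A)|² − |det(A)|² = Σ_{i,j=1}^{3} |A_{j i}|² ( |perm(A(¬j,¬i))|² − |det(A(¬j,¬i))|² ), where A(¬j,¬i) is the 2×2 submatrix of A obtained by deleting row j and column i. -/

import Mathlib

/-!
Write `perm = E + O` and `det = E - O`, with `E` and `O` the sums over even and odd permutations.
Then `perm A * perm B - det A * det B` is twice the sum of `a_σ b_τ` over pairs `(σ, τ)` of
opposite parity. In `S₃` two such permutations agree at exactly one point `j ↦ i`, and off that
point they form a pair of opposite parity for the minor at `(j, i)`, so both sides are the same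
polynomial in the entries of two independent matrices `A` and `B`. Taking `B = conj A` and
`z * conj z = |z|²` gives the theorem.
-/

open Equiv Finset

namespace Matrix

section CommSemiring

variable {R : Type*} [CommSemiring R]

theorem permanent_succ_column_zero {n : ℕ} (A : Matrix (Fin n.succ) (Fin n.succ) R) :
    A.permanent = ∑ i, A i 0 * (A.submatrix i.succAbove Fin.succ).permanent := by
  rw [permanent, univ_perm_fin_succ, ← univ_product_univ]
  simp only [sum_map, toEmbedding_apply, sum_product, Fin.prod_univ_succ,
    Perm.decomposeFin_symm_apply_zero, Perm.decomposeFin_symm_apply_succ, ← mul_sum]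
  refine sum_congr rfl fun i _ => congrArg (A i 0 * ·) ?_
  -- `decomposeFin` embeds the rows other than `i` by `swap 0 i ∘ succ`, not by `i.succAbove`.
  obtain ⟨τ, hτ⟩ : ∃ τ : Perm (Fin n), ∀ j, i.succAbove (τ j) = Equiv.swap 0 i j.succ := by
    cases i using Fin.cases with
    | zero => exact ⟨1, by simp⟩
    | succ i => exact ⟨i.cycleRange, Fin.succAbove_cycleRange i⟩
  rw [← permanent_permute_cols τ, permanent]
  simp only [submatrix_apply, id, hτ]

theorem permanent_fin_two (A : Matrix (Fin 2) (Fin 2) R) :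
    A.permanent = A 0 0 * A 1 1 + A 0 1 * A 1 0 := by
  simp only [permanent_succ_column_zero, permanent_unique, submatrix_apply, Fin.sum_univ_succ,
    univ_unique, sum_singleton, Fin.default_eq_zero, Fin.succ_zero_eq_one, Fin.zero_succAbove,
    Fin.succ_succAbove_zero]
  ring

theorem permanent_fin_three (A : Matrix (Fin 3) (Fin 3) R) :
    A.permanent =
      A 0 0 * A 1 1 * A 2 2 + A 0 0 * A 1 2 * A 2 1
      + A 0 1 * A 1 0 * A 2 2 + A 0 1 * A 1 2 * A 2 0
      + A 0 2 * A 1 0 * A 2 1 + A 0 2 * A 1 1 * A 2 0 := by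
  simp only [permanent_succ_column_zero, submatrix_apply, Fin.succ_zero_eq_one,
    submatrix_submatrix, permanent_unique, Fin.default_eq_zero, Function.comp_apply,
    Fin.succ_one_eq_two, Fin.sum_univ_succ, Fin.zero_succAbove, univ_unique,
    Fin.succ_succAbove_zero, sum_singleton, Fin.succ_succAbove_one]
  ring

theorem permanent_map {n S : Type*} [DecidableEq n] [Fintype n] [CommSemiring S] (f : R →+* S)
    (M : Matrix n n R) : (M.map f).permanent = f M.permanent := by
  simp only [permanent, map_apply, map_sum, map_prod]

end CommSemiring

theorem permanent_mul_permanent_sub_det_mul_det_fin_three {R : Type*} [CommRing R]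
    (A B : Matrix (Fin 3) (Fin 3) R) :
    A.permanent * B.permanent - A.det * B.det =
      ∑ i : Fin 3, ∑ j : Fin 3, A j i * B j i *
        ((A.submatrix j.succAbove i.succAbove).permanent *
            (B.submatrix j.succAbove i.succAbove).permanent -
          (A.submatrix j.succAbove i.succAbove).det * (B.submatrix j.succAbove i.succAbove).det) := by
  simp only [Fin.sum_univ_three, permanent_fin_two, permanent_fin_three, det_fin_two,
    det_fin_three, submatrix_apply, Fin.succAbove, Fin.castSucc_zero, Fin.succ_zero_eq_one,
    Fin.castSucc_one, Fin.succ_one_eq_two, Fin.reduceLT, lt_self_iff_false, ↓reduceIte,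
    not_lt_zero, zero_lt_one]
  ring

end Matrix

theorem stmt_5 (A : Matrix (Fin 3) (Fin 3) ℂ) :
    Complex.normSq A.permanent - Complex.normSq A.det =
      ∑ i : Fin 3, ∑ j : Fin 3,
        Complex.normSq (A j i) *
          (Complex.normSq (A.submatrix j.succAbove i.succAbove).permanent -
           Complex.normSq (A.submatrix j.succAbove i.succAbove).det) := by
  have key := A.permanent_mul_permanent_sub_det_mul_det_fin_three (A.map (starRingEnd ℂ))
  simp only [Matrix.submatrix_map, Matrix.permanent_map, Matrix.map_apply, Complex.mul_conj]
    at key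
  simp only [← RingHom.mapMatrix_apply, ← RingHom.map_det, Complex.mul_conj] at key
  exact_mod_cast key
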